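/- arXiv:1905.03817 — 3 statements merged into one kernel-verified Lean document; each statement's English description precedes it below -/
import Mathlib

section
/- Let f_1,...,f_N : R^m → R be differentiable functions whose gradients are L-Lipschitz, and let f = (1/N)∑_{i=1}^N f_i. For any points x_1,...,x_N ∈ R^m, setting x̄ = (1/N)∑_{i=1}^N x_i, we have (1/N)∑_{i=1}^N ‖∇f_i(x_i) − (1/N)∑_{j=1}^N ∇f_j(x_j)‖² ≤ (6L²/N)∑_{i=1}^N ‖x_i − x̄‖² + (3/N)∑_{i=1}^N ‖∇f_i(x̄) − ∇f(x̄)‖². -/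
open Finset

lemma gradient_avg_aux {m N : ℕ} (f : Fin N → EuclideanSpace ℝ (Fin m) → ℝ)
    (hdiff : ∀ i, Differentiable ℝ (f i)) (c : ℝ) (x : EuclideanSpace ℝ (Fin m)) :
    gradient (fun y => c * ∑ j, f j y) x = c • ∑ j, gradient (f j) x := by
  unfold gradient
  rw [fderiv_const_mul (DifferentiableAt.fun_sum fun j _ => (hdiff j).differentiableAt) c,
    fderiv_fun_sum fun j _ => (hdiff j).differentiableAt]
  simp [map_smul, map_sum]

lemma norm_sum_sq_le_aux {m N : ℕ} (v : Fin N → EuclideanSpace ℝ (Fin m)) :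
    ‖∑ j, v j‖ ^ 2 ≤ (N : ℝ) * ∑ j, ‖v j‖ ^ 2 := by
  calc ‖∑ j, v j‖ ^ 2 ≤ (∑ j, ‖v j‖) ^ 2 :=
        pow_le_pow_left₀ (norm_nonneg _) (norm_sum_le _ _) 2
    _ ≤ (N : ℝ) * ∑ j, ‖v j‖ ^ 2 := by
        simpa using sq_sum_le_card_mul_sum_sq (s := univ) (f := fun j => ‖v j‖)

lemma norm_add3_sq_le_aux {m : ℕ} (a b c : EuclideanSpace ℝ (Fin m)) :
    ‖a + b + c‖ ^ 2 ≤ 3 * ‖a‖ ^ 2 + 3 * ‖b‖ ^ 2 + 3 * ‖c‖ ^ 2 := by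
  have h : ‖a + b + c‖ ≤ ‖a‖ + ‖b‖ + ‖c‖ := norm_add₃_le
  nlinarith [norm_nonneg (a + b + c), norm_nonneg a, norm_nonneg b, norm_nonneg c,
    sq_nonneg (‖a‖ - ‖b‖), sq_nonneg (‖a‖ - ‖c‖), sq_nonneg (‖b‖ - ‖c‖)]

/-- concentration of gradients sampled at different points,
bounded by the deviation of the points from their average plus gradient diversity. -/
theorem stmt1 {m N : ℕ} (hN : 0 < N) (L : ℝ)
    (f : Fin N → EuclideanSpace ℝ (Fin m) → ℝ)
    (hdiff : ∀ i, Differentiable ℝ (f i))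
    (hlip : ∀ i x y, ‖gradient (f i) x - gradient (f i) y‖ ≤ L * ‖x - y‖)
    (x : Fin N → EuclideanSpace ℝ (Fin m)) :
    (N : ℝ)⁻¹ * ∑ i, ‖gradient (f i) (x i) -
        (N : ℝ)⁻¹ • ∑ j, gradient (f j) (x j)‖ ^ 2 ≤
      (6 * L ^ 2 / N) * ∑ i, ‖x i - (N : ℝ)⁻¹ • ∑ j, x j‖ ^ 2 +
      (3 / N) * ∑ i, ‖gradient (f i) ((N : ℝ)⁻¹ • ∑ j, x j) -
        gradient (fun y => (N : ℝ)⁻¹ * ∑ j, f j y) ((N : ℝ)⁻¹ • ∑ j, x j)‖ ^ 2 := by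
  have hNpos : (0 : ℝ) < N := by exact_mod_cast hN
  set xb : EuclideanSpace ℝ (Fin m) := (N : ℝ)⁻¹ • ∑ j, x j with hxb
  set g : Fin N → EuclideanSpace ℝ (Fin m) := fun i => gradient (f i) (x i) with hgdef
  set h : Fin N → EuclideanSpace ℝ (Fin m) := fun i => gradient (f i) xb with hhdef
  have hG : gradient (fun y => (N : ℝ)⁻¹ * ∑ j, f j y) xb = (N : ℝ)⁻¹ • ∑ j, h j :=
    gradient_avg_aux f hdiff _ xb
  -- Lipschitz squared bound
  have key : ∀ (a b : EuclideanSpace ℝ (Fin m)) i,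
      ‖gradient (f i) a - gradient (f i) b‖ ^ 2 ≤ L ^ 2 * ‖a - b‖ ^ 2 := by
    intro a b i
    have h1 := hlip i a b
    nlinarith [norm_nonneg (gradient (f i) a - gradient (f i) b), norm_nonneg (a - b)]
  -- bound on the cross term (independent of i)
  have hc : ‖(N : ℝ)⁻¹ • ∑ j, h j - (N : ℝ)⁻¹ • ∑ j, g j‖ ^ 2
      ≤ (N : ℝ)⁻¹ * (L ^ 2 * ∑ j, ‖x j - xb‖ ^ 2) := by
    have e1 : (N : ℝ)⁻¹ • ∑ j, h j - (N : ℝ)⁻¹ • ∑ j, g j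
        = (N : ℝ)⁻¹ • ∑ j, (h j - g j) := by
      rw [Finset.sum_sub_distrib, smul_sub]
    rw [e1, norm_smul]
    have h2 : ‖∑ j, (h j - g j)‖ ^ 2 ≤ (N : ℝ) * ∑ j, ‖h j - g j‖ ^ 2 :=
      norm_sum_sq_le_aux _
    have h3 : ∑ j, ‖h j - g j‖ ^ 2 ≤ L ^ 2 * ∑ j, ‖x j - xb‖ ^ 2 := by
      rw [Finset.mul_sum]
      apply Finset.sum_le_sum
      intro j _
      have := key xb (x j) j
      simpa [norm_sub_rev] using this
    have hn : ‖(N : ℝ)⁻¹‖ = (N : ℝ)⁻¹ := by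
      rw [Real.norm_eq_abs, abs_of_nonneg (by positivity)]
    rw [hn, mul_pow]
    calc ((N : ℝ)⁻¹) ^ 2 * ‖∑ j, (h j - g j)‖ ^ 2
        ≤ ((N : ℝ)⁻¹) ^ 2 * ((N : ℝ) * ∑ j, ‖h j - g j‖ ^ 2) := by
          apply mul_le_mul_of_nonneg_left h2 (by positivity)
      _ = (N : ℝ)⁻¹ * ∑ j, ‖h j - g j‖ ^ 2 := by
          field_simp
      _ ≤ (N : ℝ)⁻¹ * (L ^ 2 * ∑ j, ‖x j - xb‖ ^ 2) := by
          apply mul_le_mul_of_nonneg_left h3 (by positivity)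
  -- pointwise decomposition bound
  have hpt : ∀ i, ‖g i - (N : ℝ)⁻¹ • ∑ j, g j‖ ^ 2
      ≤ 3 * (L ^ 2 * ‖x i - xb‖ ^ 2)
        + 3 * ‖h i - (N : ℝ)⁻¹ • ∑ j, h j‖ ^ 2
        + 3 * ((N : ℝ)⁻¹ * (L ^ 2 * ∑ j, ‖x j - xb‖ ^ 2)) := by
    intro i
    have edec : g i - (N : ℝ)⁻¹ • ∑ j, g j
        = (g i - h i) + (h i - (N : ℝ)⁻¹ • ∑ j, h j)
          + ((N : ℝ)⁻¹ • ∑ j, h j - (N : ℝ)⁻¹ • ∑ j, g j) := by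
      abel
    rw [edec]
    have h3 := norm_add3_sq_le_aux (g i - h i) (h i - (N : ℝ)⁻¹ • ∑ j, h j)
      ((N : ℝ)⁻¹ • ∑ j, h j - (N : ℝ)⁻¹ • ∑ j, g j)
    have ha : ‖g i - h i‖ ^ 2 ≤ L ^ 2 * ‖x i - xb‖ ^ 2 := key (x i) xb i
    nlinarith [hc]
  -- sum the pointwise bound
  have hsum : ∑ i, ‖g i - (N : ℝ)⁻¹ • ∑ j, g j‖ ^ 2
      ≤ 6 * L ^ 2 * ∑ i, ‖x i - xb‖ ^ 2
        + 3 * ∑ i, ‖h i - (N : ℝ)⁻¹ • ∑ j, h j‖ ^ 2 := by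
    calc ∑ i, ‖g i - (N : ℝ)⁻¹ • ∑ j, g j‖ ^ 2
        ≤ ∑ i, (3 * (L ^ 2 * ‖x i - xb‖ ^ 2)
            + 3 * ‖h i - (N : ℝ)⁻¹ • ∑ j, h j‖ ^ 2
            + 3 * ((N : ℝ)⁻¹ * (L ^ 2 * ∑ j, ‖x j - xb‖ ^ 2))) :=
          Finset.sum_le_sum fun i _ => hpt i
      _ = 3 * L ^ 2 * ∑ i, ‖x i - xb‖ ^ 2
            + 3 * ∑ i, ‖h i - (N : ℝ)⁻¹ • ∑ j, h j‖ ^ 2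
            + (N : ℝ) * (3 * ((N : ℝ)⁻¹ * (L ^ 2 * ∑ j, ‖x j - xb‖ ^ 2))) := by
          rw [Finset.sum_add_distrib, Finset.sum_add_distrib, ← Finset.mul_sum,
            ← Finset.mul_sum, Finset.sum_const, card_univ, Fintype.card_fin,
            nsmul_eq_mul]
          ring_nf
          rw [← Finset.sum_mul]
      _ = 6 * L ^ 2 * ∑ i, ‖x i - xb‖ ^ 2
            + 3 * ∑ i, ‖h i - (N : ℝ)⁻¹ • ∑ j, h j‖ ^ 2 := by
          have e2 : ∀ S T : ℝ, 3 * L ^ 2 * S + 3 * T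
              + (N : ℝ) * (3 * ((N : ℝ)⁻¹ * (L ^ 2 * S))) = 6 * L ^ 2 * S + 3 * T := by
            intro S T
            field_simp
            ring
          exact e2 _ _
  rw [hG]
  calc (N : ℝ)⁻¹ * ∑ i, ‖g i - (N : ℝ)⁻¹ • ∑ j, g j‖ ^ 2
      ≤ (N : ℝ)⁻¹ * (6 * L ^ 2 * ∑ i, ‖x i - xb‖ ^ 2
          + 3 * ∑ i, ‖h i - (N : ℝ)⁻¹ • ∑ j, h j‖ ^ 2) :=
        mul_le_mul_of_nonneg_left hsum (by positivity)
    _ = (6 * L ^ 2 / N) * ∑ i, ‖x i - xb‖ ^ 2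
          + (3 / N) * ∑ i, ‖h i - (N : ℝ)⁻¹ • ∑ j, h j‖ ^ 2 := by
        have e3 : ∀ S T : ℝ, (N : ℝ)⁻¹ * (6 * L ^ 2 * S + 3 * T)
            = (6 * L ^ 2 / N) * S + (3 / N) * T := by
          intro S T
          field_simp
        exact e3 _ _
end

section
/- In the Nesterov momentum averaging recursion (ū^(0)=0, ū^(t)=β ū^(t−1)+G^(t−1), v̄^(t)=β ū^(t)+G^(t−1), x̄^(t)=x̄^(t−1)−γ v̄^(t), ȳ^(0)=x̄^(0), ȳ^(t)=(1/(1−β))x̄^(t)−(β/(1−β))x̄^(t−1)+(γβ/(1−β))G^(t−1)), we have ȳ^(t) − x̄^(t) = −(γβ²/(1−β)) ū^(t) for all t ≥ 1, and consequently ∑_{t=0}^{T−1} ‖ȳ^(t) − x̄^(t)‖² ≤ (γ²β⁴/(1−β)⁴) ∑_{t=0}^{T−1} ‖G^(t)‖² for all T ≥ 1. -/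
/-- `ȳ - x̄` identity and cumulative bound for Nesterov momentum averaging. -/
theorem stmt11 {m : ℕ} (β γ : ℝ) (hβ0 : 0 ≤ β) (hβ1 : β < 1) (hγ : 0 < γ)
    (G u v x y : ℕ → EuclideanSpace ℝ (Fin m))
    (hu0 : u 0 = 0)
    (hu : ∀ t : ℕ, u (t + 1) = β • u t + G t)
    (hv : ∀ t : ℕ, v (t + 1) = β • u (t + 1) + G t)
    (hx : ∀ t : ℕ, x (t + 1) = x t - γ • v (t + 1))
    (hy0 : y 0 = x 0)
    (hy : ∀ t : ℕ, y (t + 1) = (1 / (1 - β)) • x (t + 1) - (β / (1 - β)) • x t +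
      ((γ * β) / (1 - β)) • G t) :
    (∀ t : ℕ, 1 ≤ t → y t - x t = -((γ * β ^ 2) / (1 - β)) • u t) ∧
    ∀ T : ℕ, 1 ≤ T →
      ∑ t ∈ Finset.range T, ‖y t - x t‖ ^ 2 ≤
        (γ ^ 2 * β ^ 4 / (1 - β) ^ 4) * ∑ t ∈ Finset.range T, ‖G t‖ ^ 2 := by
  have hb : (0:ℝ) < 1 - β := by linarith
  have hbne : (1:ℝ) - β ≠ 0 := ne_of_gt hb
  -- the identity
  have hid : ∀ t : ℕ, y (t + 1) - x (t + 1) = -((γ * β ^ 2) / (1 - β)) • u (t + 1) := by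
    intro t
    rw [hy t, hx t, hv t]
    match_scalars <;> field_simp <;> ring
  -- norm recursion for u
  have hrec : ∀ t : ℕ, (1 - β) * ‖u (t + 1)‖ ^ 2 ≤
      (1 - β) * β * ‖u t‖ ^ 2 + ‖G t‖ ^ 2 := by
    intro t
    have h1 : ‖u (t + 1)‖ ≤ β * ‖u t‖ + ‖G t‖ := by
      rw [hu t]
      calc ‖β • u t + G t‖ ≤ ‖β • u t‖ + ‖G t‖ := norm_add_le _ _
        _ = β * ‖u t‖ + ‖G t‖ := by rw [norm_smul, Real.norm_of_nonneg hβ0]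
    have ha := norm_nonneg (u t)
    have hg := norm_nonneg (G t)
    have hn := norm_nonneg (u (t + 1))
    nlinarith [mul_nonneg hβ0 (sq_nonneg ((1 - β) * ‖u t‖ - ‖G t‖)),
      mul_le_mul h1 h1 hn (by positivity : (0:ℝ) ≤ β * ‖u t‖ + ‖G t‖)]
  -- cumulative bound on u
  have SB : ∀ T : ℕ, (1 - β) ^ 2 * ∑ t ∈ Finset.range T, ‖u t‖ ^ 2 ≤
      ∑ t ∈ Finset.range T, ‖G t‖ ^ 2 := by
    intro T
    cases T with
    | zero => simp
    | succ n =>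
      have h1 : (1 - β) * ∑ t ∈ Finset.range (n + 1), ‖u t‖ ^ 2 ≤
          (1 - β) * β * ∑ t ∈ Finset.range n, ‖u t‖ ^ 2 +
            ∑ t ∈ Finset.range n, ‖G t‖ ^ 2 := by
        rw [Finset.sum_range_succ' (fun t => ‖u t‖ ^ 2) n, hu0]
        simp only [norm_zero]
        rw [mul_add, Finset.mul_sum, Finset.mul_sum, ← Finset.sum_add_distrib]
        have := Finset.sum_le_sum (fun i (_ : i ∈ Finset.range n) => hrec i)
        simpa using this
      have h2 : ∑ t ∈ Finset.range n, ‖u t‖ ^ 2 ≤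
          ∑ t ∈ Finset.range (n + 1), ‖u t‖ ^ 2 := by
        apply Finset.sum_le_sum_of_subset_of_nonneg
        · exact Finset.range_subset_range.2 (Nat.le_succ n)
        · intros; positivity
      have h3 : ∑ t ∈ Finset.range n, ‖G t‖ ^ 2 ≤
          ∑ t ∈ Finset.range (n + 1), ‖G t‖ ^ 2 := by
        apply Finset.sum_le_sum_of_subset_of_nonneg
        · exact Finset.range_subset_range.2 (Nat.le_succ n)
        · intros; positivity
      nlinarith [mul_le_mul_of_nonneg_left h2 (mul_nonneg (le_of_lt hb) hβ0)]
  -- per-term equality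
  have hterm : ∀ t : ℕ, ‖y t - x t‖ ^ 2 = ((γ * β ^ 2) / (1 - β)) ^ 2 * ‖u t‖ ^ 2 := by
    intro t
    cases t with
    | zero => simp [hy0, hu0]
    | succ n =>
      rw [hid n, norm_smul, Real.norm_eq_abs, mul_pow, sq_abs]
      ring
  constructor
  · intro t ht
    obtain ⟨n, rfl⟩ := Nat.exists_eq_add_of_le ht
    simpa [Nat.add_comm] using hid n
  · intro T _
    have hsum : ∑ t ∈ Finset.range T, ‖y t - x t‖ ^ 2 =
        ((γ * β ^ 2) / (1 - β)) ^ 2 * ∑ t ∈ Finset.range T, ‖u t‖ ^ 2 := by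
      rw [Finset.mul_sum]
      exact Finset.sum_congr rfl fun t _ => hterm t
    rw [hsum]
    have hSB := SB T
    have hc : ((γ * β ^ 2) / (1 - β)) ^ 2 =
        (γ ^ 2 * β ^ 4 / (1 - β) ^ 4) * (1 - β) ^ 2 := by
      field_simp
    rw [hc, mul_assoc]
    have hco : (0:ℝ) ≤ γ ^ 2 * β ^ 4 / (1 - β) ^ 4 := by positivity
    exact mul_le_mul_of_nonneg_left hSB hco
end

section
/- Let 0 ≤ ρ < 1 and let a_0,...,a_{T−1} be nonnegative real numbers. Then ∑_{t=1}^{T−1} ∑_{τ=0}^{t−1} ∑_{τ'=0}^{t−1} ρ^{(2t−2−τ−τ')/2} (a_τ + a_{τ'})/2 ≤ (1/(1−√ρ)²) ∑_{τ=0}^{T−1} a_τ. -/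
/-! With `s = √ρ` the exponent splits as `(t - 1 - τ) + (t - 1 - τ')`, so by symmetry in `τ, τ'`
the inner double sum is `(∑_τ s^(t-1-τ)) · (∑_τ s^(t-1-τ) a_τ)`. The first factor is a partial
geometric sum, hence at most `1/(1 - s)`; exchanging the sums over `t` and `τ` in the second
factor produces one more geometric sum in `t` for each `a_τ`. -/

open Finset

theorem sum_sum_mul_mul_add_div_two {K ι : Type*} [Field K] [CharZero K] (S : Finset ι)
    (w a : ι → K) :
    ∑ i ∈ S, ∑ j ∈ S, w i * w j * ((a i + a j) / 2) = (∑ i ∈ S, w i) * ∑ i ∈ S, w i * a i := by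
  have hswap : ∑ i ∈ S, ∑ j ∈ S, w i * w j * a j = ∑ i ∈ S, ∑ j ∈ S, w i * w j * a i := by
    rw [sum_comm]
    exact sum_congr rfl fun i _ => sum_congr rfl fun j _ => by ring
  calc ∑ i ∈ S, ∑ j ∈ S, w i * w j * ((a i + a j) / 2)
      = (∑ i ∈ S, ∑ j ∈ S, w i * w j * a i + ∑ i ∈ S, ∑ j ∈ S, w i * w j * a j) / 2 := by
        simp only [mul_add, add_div, sum_add_distrib, sum_div, mul_div_assoc]
    _ = ∑ i ∈ S, ∑ j ∈ S, w i * w j * a i := by rw [hswap]; ring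
    _ = (∑ i ∈ S, w i) * ∑ i ∈ S, w i * a i := by
        rw [sum_mul_sum, sum_comm]
        exact sum_congr rfl fun i _ => sum_congr rfl fun j _ => by ring

section GeometricBounds

variable {K : Type*} [Field K] [LinearOrder K] [IsStrictOrderedRing K] {s : K}

theorem sum_pow_le_inv_one_sub_of_injOn {ι : Type*} (hs0 : 0 ≤ s) (hs1 : s < 1)
    {S : Finset ι} {f : ι → ℕ} (hf : Set.InjOn f S) :
    ∑ i ∈ S, s ^ f i ≤ (1 - s)⁻¹ := by
  rw [← sum_image hf]
  calc ∑ k ∈ S.image f, s ^ k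
      ≤ ∑ k ∈ Ico 0 ((S.image f).sup id + 1), s ^ k := by
        refine sum_le_sum_of_subset_of_nonneg (fun k hk => ?_) fun k _ _ => pow_nonneg hs0 k
        simpa [Nat.lt_succ_iff] using le_sup (f := id) hk
    _ ≤ s ^ 0 / (1 - s) := geom_sum_Ico_le_of_lt_one hs0 hs1
    _ = (1 - s)⁻¹ := by rw [pow_zero, one_div]

theorem sum_Ico_sum_range_pow_mul_le (hs0 : 0 ≤ s) (hs1 : s < 1) {a : ℕ → K}
    (ha : ∀ t, 0 ≤ a t) (T : ℕ) :
    ∑ t ∈ Ico 1 T, ∑ τ ∈ range t, s ^ (t - 1 - τ) * a τ ≤ (1 - s)⁻¹ * ∑ τ ∈ range T, a τ := by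
  rw [sum_comm' (t' := range T) (s' := fun τ => Ioo τ T) fun t τ => by
    simp only [mem_Ico, mem_range, mem_Ioo]; omega, mul_sum]
  refine sum_le_sum fun τ _ => ?_
  rw [← sum_mul]
  exact mul_le_mul_of_nonneg_right
    (sum_pow_le_inv_one_sub_of_injOn hs0 hs1 fun t ht t' ht' h => by
      simp only [coe_Ioo, Set.mem_Ioo] at ht ht'; omega)
    (ha τ)

end GeometricBounds

theorem stmt16_general (ρ : ℝ) (hρ1 : ρ < 1) (T : ℕ)
    (a : ℕ → ℝ) (ha : ∀ t, 0 ≤ a t) :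
    ∑ t ∈ Finset.Ico 1 T, ∑ τ ∈ Finset.range t, ∑ τ' ∈ Finset.range t,
        Real.sqrt ρ ^ (2 * t - 2 - τ - τ') * ((a τ + a τ') / 2) ≤
      (1 / (1 - Real.sqrt ρ) ^ 2) * ∑ τ ∈ Finset.range T, a τ := by
  set s := Real.sqrt ρ
  have hs0 : 0 ≤ s := Real.sqrt_nonneg ρ
  have hs1 : s < 1 := (Real.sqrt_lt' one_pos).mpr (by rwa [one_pow])
  have hsplit : ∀ t, ∀ τ ∈ range t, ∀ τ' ∈ range t,
      s ^ (2 * t - 2 - τ - τ') = s ^ (t - 1 - τ) * s ^ (t - 1 - τ') := fun t τ hτ τ' hτ' => by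
    rw [← pow_add]; congr 1; simp only [mem_range] at hτ hτ'; omega
  calc ∑ t ∈ Ico 1 T, ∑ τ ∈ range t, ∑ τ' ∈ range t, s ^ (2 * t - 2 - τ - τ') * ((a τ + a τ') / 2)
      = ∑ t ∈ Ico 1 T, (∑ τ ∈ range t, s ^ (t - 1 - τ)) *
          ∑ τ ∈ range t, s ^ (t - 1 - τ) * a τ := by
        refine sum_congr rfl fun t _ => ?_
        rw [← sum_sum_mul_mul_add_div_two]
        exact sum_congr rfl fun τ hτ => sum_congr rfl fun τ' hτ' => by rw [hsplit t τ hτ τ' hτ']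
    _ ≤ ∑ t ∈ Ico 1 T, (1 - s)⁻¹ * ∑ τ ∈ range t, s ^ (t - 1 - τ) * a τ := by
        gcongr with t
        · exact sum_nonneg fun τ _ => mul_nonneg (pow_nonneg hs0 _) (ha τ)
        · exact sum_pow_le_inv_one_sub_of_injOn hs0 hs1 fun τ hτ τ' hτ' h => by
            simp only [coe_range, Set.mem_Iio] at hτ hτ'; omega
    _ ≤ (1 - s)⁻¹ * ((1 - s)⁻¹ * ∑ τ ∈ range T, a τ) := by
        rw [← mul_sum]
        gcongr
        exact sum_Ico_sum_range_pow_mul_le hs0 hs1 ha T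
    _ = 1 / (1 - s) ^ 2 * ∑ τ ∈ range T, a τ := by rw [one_div, ← inv_pow]; ring

/-- double geometric-sum bound with decay rate `√ρ`. -/
theorem stmt16 (ρ : ℝ) (hρ0 : 0 ≤ ρ) (hρ1 : ρ < 1) (T : ℕ)
    (a : ℕ → ℝ) (ha : ∀ t, 0 ≤ a t) :
    ∑ t ∈ Finset.Ico 1 T, ∑ τ ∈ Finset.range t, ∑ τ' ∈ Finset.range t,
        Real.sqrt ρ ^ (2 * t - 2 - τ - τ') * ((a τ + a τ') / 2) ≤
      (1 / (1 - Real.sqrt ρ) ^ 2) * ∑ τ ∈ Finset.range T, a τ :=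
  stmt16_general ρ hρ1 T a ha
end
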